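/- Let A and B be real symmetric positive definite n×n matrices with A ⪯ B (Loewner order) and det(B) ≤ θ · det(A) for some θ ≥ 1. Then B ⪯ θ · A; equivalently, ‖A^{-1/2} B A^{-1/2}‖₂ ≤ θ. -/

import Mathlib

open Matrix MeasureTheory ProbabilityTheory Filter

/-- Frobenius norm of a real matrix. -/
noncomputable def frob {α β : Type*} [Fintype α] [Fintype β] (A : Matrix α β ℝ) : ℝ :=
  Real.sqrt (∑ i, ∑ j, (A i j) ^ 2)

/-- Spectral norm (largest singular value) of a real matrix. -/
noncomputable def spec {α β : Type*} [Fintype α] [Fintype β] [DecidableEq β]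
    (A : Matrix α β ℝ) : ℝ :=
  ‖LinearMap.toContinuousLinearMap (Matrix.toEuclideanLin A)‖

/-- The positive semidefinite square root of a positive semidefinite real matrix
(junk value `0` if the matrix is not positive semidefinite). -/
noncomputable def msqrt {α : Type*} [Fintype α] [DecidableEq α]
    (M : Matrix α α ℝ) : Matrix α α ℝ :=
  open scoped Classical in
  if h : M.PosSemidef then
    h.1.eigenvectorUnitary.1 * diagonal (Real.sqrt ∘ h.1.eigenvalues) *
      (star h.1.eigenvectorUnitary : Matrix α α ℝ)
  else 0

/-- Euclidean norm of a real vector. -/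
noncomputable def vnorm {α : Type*} [Fintype α] (v : α → ℝ) : ℝ :=
  Real.sqrt (∑ i, (v i) ^ 2)

/-! Put `M = A^{-1/2} B A^{-1/2}`. Then `1 ≤ M` and `det M = det B / det A ≤ θ`. The eigenvalues
of `M` are all at least `1` and multiply to `det M`, so each of them is at most `θ`, i.e.
`M ≤ θ`. Conjugating back by `A^{1/2}` gives `B ≤ θ A`, and for the positive matrix `M` the
bound `M ≤ θ` is the operator-norm bound `‖M‖ ≤ θ`. -/

open scoped MatrixOrder Matrix.Norms.L2Operator

lemma Finset.single_le_prod_of_one_le {ι R : Type*} [CommMonoidWithZero R] [Preorder R]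
    [ZeroLEOneClass R] [PosMulMono R] {f : ι → R} {s : Finset ι} (hf : ∀ i ∈ s, 1 ≤ f i)
    {j : ι} (hj : j ∈ s) : f j ≤ ∏ i ∈ s, f i := by
  simpa using Finset.prod_le_prod_of_subset_of_one_le (Finset.singleton_subset_iff.mpr hj)
    (by simpa using zero_le_one.trans (hf j hj)) fun i hi _ => hf i hi

lemma norm_le_of_nonneg_of_le_algebraMap {A : Type*} [NormedRing A] [StarRing A]
    [NormedAlgebra ℝ A] [PartialOrder A] [StarOrderedRing A]
    [IsometricContinuousFunctionalCalculus ℝ A IsSelfAdjoint] [NonnegSpectrumClass ℝ A]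
    {a : A} {r : ℝ} (hr : 0 ≤ r) (ha : 0 ≤ a) (h : a ≤ algebraMap ℝ A r) : ‖a‖ ≤ r := by
  rw [← cfc_id' ℝ a]
  refine norm_cfc_le hr fun x hx => ?_
  rw [Real.norm_eq_abs, abs_le]
  exact ⟨by linarith [spectrum_nonneg_of_nonneg ha hx],
    (le_algebraMap_iff_spectrum_le (R := ℝ)).mp h x hx⟩

namespace Matrix

variable {ι : Type*} [Fintype ι] [DecidableEq ι]

lemma det_conjSqrt {𝕜 : Type*} [RCLike 𝕜] {c : Matrix ι ι 𝕜} (hc : 0 ≤ c) (a : Matrix ι ι 𝕜) :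
    (CFC.conjSqrt c a).det = c.det * a.det := by
  rw [CFC.conjSqrt_apply, det_mul, det_mul, mul_right_comm, ← det_mul, CFC.sqrt_mul_sqrt_self c hc]

lemma le_algebraMap_of_one_le_of_det_le {M : Matrix ι ι ℝ} {θ : ℝ} (h1 : 1 ≤ M)
    (hdet : M.det ≤ θ) : M ≤ algebraMap ℝ _ θ := by
  have hM : M.IsHermitian := IsSelfAdjoint.of_ge h1 (.one _)
  have h1' : algebraMap ℝ (Matrix ι ι ℝ) 1 ≤ M := by rwa [map_one]
  have hone : ∀ i, 1 ≤ hM.eigenvalues i := fun i =>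
    (algebraMap_le_iff_le_spectrum (R := ℝ)).mp h1' _ (hM.eigenvalues_mem_spectrum_real i)
  have hprod : ∏ i, hM.eigenvalues i ≤ θ := by
    simpa [hM.det_eq_prod_eigenvalues] using hdet
  rw [le_algebraMap_iff_spectrum_le, hM.spectrum_real_eq_range_eigenvalues]
  rintro _ ⟨j, rfl⟩
  exact (Finset.single_le_prod_of_one_le (fun i _ => hone i) (Finset.mem_univ j)).trans hprod

lemma spec_eq_l2_opNorm (A : Matrix ι ι ℝ) : spec A = ‖A‖ := rfl

lemma PosSemidef.msqrt_eq_sqrt {A : Matrix ι ι ℝ} (hA : A.PosSemidef) :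
    msqrt A = CFC.sqrt A := by
  rw [msqrt, dif_pos hA, CFC.sqrt_eq_cfc, cfc_nnreal_eq_real _ A hA.nonneg, hA.1.cfc_eq,
    IsHermitian.cfc]
  simp [Unitary.conjStarAlgAut_apply, Function.comp_def, max_eq_left (hA.eigenvalues_nonneg _)]

lemma PosDef.inv_msqrt_mul_mul_inv_msqrt {A : Matrix ι ι ℝ} (hA : A.PosDef) (B : Matrix ι ι ℝ) :
    (msqrt A)⁻¹ * B * (msqrt A)⁻¹ = CFC.conjSqrt (Ring.inverse A) B := by
  rw [hA.posSemidef.msqrt_eq_sqrt, hA.posSemidef.inv_sqrt, nonsing_inv_eq_ringInverse,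
    CFC.conjSqrt_apply]

end Matrix

theorem loewner_from_det_ratio_general {n : ℕ} (A B : Matrix (Fin n) (Fin n) ℝ) (θ : ℝ)
    (hA : A.PosDef) (hθ : 1 ≤ θ)
    (hAB : (B - A).PosSemidef) (hdet : B.det ≤ θ * A.det) :
    (θ • A - B).PosSemidef ∧ spec ((msqrt A)⁻¹ * B * (msqrt A)⁻¹) ≤ θ := by
  have hA' : IsStrictlyPositive A := isStrictlyPositive_iff_posDef.mpr hA
  set M := CFC.conjSqrt (Ring.inverse A) B
  have hM1 : 1 ≤ M := CFC.conjSqrt_ringInverse_self A ▸ CFC.conjSqrt_le_conjSqrt hAB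
  have hMdet : M.det ≤ θ := by
    rwa [det_conjSqrt hA'.ringInverse.nonneg, ← nonsing_inv_eq_ringInverse, det_nonsing_inv,
      Ring.inverse_eq_inv', inv_mul_le_iff₀ hA.det_pos, mul_comm]
  have hMθ : M ≤ algebraMap ℝ _ θ := le_algebraMap_of_one_le_of_det_le hM1 hMdet
  refine ⟨le_iff.mp ?_, ?_⟩
  · calc B = CFC.conjSqrt A M := (CFC.conjSqrt_conjSqrt_ringInverse A B).symm
      _ ≤ CFC.conjSqrt A (algebraMap ℝ _ θ) := CFC.conjSqrt_le_conjSqrt hMθ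
      _ = θ • A := by rw [Algebra.algebraMap_eq_smul_one, map_smul, CFC.conjSqrt_one A]
  · rw [hA.inv_msqrt_mul_mul_inv_msqrt, spec_eq_l2_opNorm]
    exact norm_le_of_nonneg_of_le_algebraMap (by linarith) (zero_le_one.trans hM1) hMθ

theorem loewner_from_det_ratio {n : ℕ} (A B : Matrix (Fin n) (Fin n) ℝ) (θ : ℝ)
    (hA : A.PosDef) (hB : B.PosDef) (hθ : 1 ≤ θ)
    (hAB : (B - A).PosSemidef) (hdet : B.det ≤ θ * A.det) :
    (θ • A - B).PosSemidef ∧ spec ((msqrt A)⁻¹ * B * (msqrt A)⁻¹) ≤ θ :=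
  loewner_from_det_ratio_general A B θ hA hθ hAB hdet
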